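/- arXiv:2307.01527 — 7 statements merged into one kernel-verified Lean document; each statement's English description precedes it below -/
import Mathlib

section
/- (Property 3 of the sign of directed pairings.) Let M₁, M₂ be directed pairings on a finite set S with 2n elements and M₃, M₄ directed pairings on a finite set T with 2p elements. Form directed pairings M₁ ⊔ M₃ and M₂ ⊔ M₄ on the disjoint union S ⊕ T (a map Fin (n+p) → (S ⊕ T) × (S ⊕ T) listing first the pairs of the pairing on S, then those of the pairing on T). Then ε(M₁, M₂) · ε(M₃, M₄) = ε(M₁ ⊔ M₃, M₂ ⊔ M₄). -/
/-- The listing function of a candidate directed pairing `M : Fin n → S × S`: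
it sends `(i, 0)` to the first element of the `i`-th pair and `(i, 1)` to the second. -/
def pairingListing {S : Type*} {n : ℕ} (M : Fin n → S × S) : Fin n × Fin 2 → S :=
  fun p => if p.2 = 0 then (M p.1).1 else (M p.1).2

/-- `M : Fin n → S × S` is a directed pairing on `S` if its `2n` components are
pairwise distinct and exhaust `S`, i.e. its listing function is a bijection. -/
def IsDirectedPairing {S : Type*} {n : ℕ} (M : Fin n → S × S) : Prop :=
  Function.Bijective (pairingListing M)

/-- The bijection `fl_M : Fin n × Fin 2 ≃ S` induced by a directed pairing. -/
noncomputable def pairingFlatten {S : Type*} {n : ℕ} {M : Fin n → S × S}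
    (h : IsDirectedPairing M) : Fin n × Fin 2 ≃ S :=
  Equiv.ofBijective _ h

/-- The sign `ε(M₁, M₂)` of two directed pairings on the same finite set `S`:
the sign of the permutation `fl_{M₂} ∘ fl_{M₁}⁻¹` of `S`. -/
noncomputable def pairingSign {S : Type*} [Fintype S] [DecidableEq S] {n : ℕ}
    {M₁ M₂ : Fin n → S × S} (h₁ : IsDirectedPairing M₁) (h₂ : IsDirectedPairing M₂) : ℤˣ :=
  Equiv.Perm.sign ((pairingFlatten h₁).symm.trans (pairingFlatten h₂))

/-- The disjoint union of a directed pairing on `S` and one on `T`, as a directed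
pairing on `S ⊕ T`: it lists first the pairs of the pairing on `S`, then those on `T`. -/
def sumPairing {S T : Type*} {n p : ℕ} (M : Fin n → S × S) (M' : Fin p → T × T) :
    Fin (n + p) → (S ⊕ T) × (S ⊕ T) :=
  fun i =>
    match finSumFinEquiv.symm i with
    | Sum.inl j => ((Sum.inl (M j).1 : S ⊕ T), (Sum.inl (M j).2 : S ⊕ T))
    | Sum.inr j => ((Sum.inr (M' j).1 : S ⊕ T), (Sum.inr (M' j).2 : S ⊕ T))

/-- The reindexing equivalence used to flatten a sum pairing. -/
def sumReindex (n p : ℕ) : Fin (n + p) × Fin 2 ≃ (Fin n × Fin 2) ⊕ (Fin p × Fin 2) :=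
  (finSumFinEquiv.symm.prodCongr (Equiv.refl (Fin 2))).trans
    (Equiv.sumProdDistrib (Fin n) (Fin p) (Fin 2))

lemma pairingFlatten_sum {S T : Type*} {n p : ℕ} {M : Fin n → S × S} {M' : Fin p → T × T}
    (h : IsDirectedPairing M) (h' : IsDirectedPairing M')
    (hs : IsDirectedPairing (sumPairing M M')) :
    pairingFlatten hs =
      (sumReindex n p).trans (Equiv.sumCongr (pairingFlatten h) (pairingFlatten h')) := by
  apply Equiv.ext
  rintro ⟨i, b⟩
  show pairingListing (sumPairing M M') (i, b) = _
  simp only [sumReindex, Equiv.trans_apply, Equiv.prodCongr_apply, Equiv.coe_refl,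
    Prod.map_apply, id_eq]
  unfold pairingListing sumPairing
  rcases hf : finSumFinEquiv.symm i with j | j <;> by_cases hb : b = 0 <;>
    simp [hf, hb, Equiv.sumProdDistrib, pairingFlatten, Equiv.ofBijective, pairingListing]

/-- Property 3: the sign is multiplicative under disjoint union of pairings:
`ε(M₁, M₂) · ε(M₃, M₄) = ε(M₁ ⊔ M₃, M₂ ⊔ M₄)`. -/
theorem pairingSign_sum {S T : Type*} [Fintype S] [DecidableEq S] [Fintype T] [DecidableEq T]
    {n p : ℕ} (M₁ M₂ : Fin n → S × S) (M₃ M₄ : Fin p → T × T)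
    (h₁ : IsDirectedPairing M₁) (h₂ : IsDirectedPairing M₂)
    (h₃ : IsDirectedPairing M₃) (h₄ : IsDirectedPairing M₄)
    (h₁₃ : IsDirectedPairing (sumPairing M₁ M₃))
    (h₂₄ : IsDirectedPairing (sumPairing M₂ M₄)) :
    pairingSign h₁ h₂ * pairingSign h₃ h₄ = pairingSign h₁₃ h₂₄ := by
  unfold pairingSign
  rw [pairingFlatten_sum h₁ h₃ h₁₃, pairingFlatten_sum h₂ h₄ h₂₄]
  have : ((sumReindex n p).trans
        ((pairingFlatten h₁).sumCongr (pairingFlatten h₃))).symm.trans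
      ((sumReindex n p).trans ((pairingFlatten h₂).sumCongr (pairingFlatten h₄))) =
      Equiv.sumCongr ((pairingFlatten h₁).symm.trans (pairingFlatten h₂))
        ((pairingFlatten h₃).symm.trans (pairingFlatten h₄)) := by
    ext x
    rcases x with x | x <;> simp
  rw [this, Equiv.Perm.sign_sumCongr]
end

section
/- (Reformulation of signs used in the Wick expansion, eq. (sign_reform).) Let M_ref and M₀ be directed pairings on a finite set S with 2p elements, let D ∈ ℕ, and let E be any directed pairing on S × Fin D. Then ε(M_ref^{(D)}, E) · ε(M_ref, M₀)^D = ε(M₀^{(D)}, E), where M^{(D)} denotes the D-fold disjoint copy of M on S × Fin D given by the pairs (((M i).1, d), ((M i).2, d)). -/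
/-- The `D`-fold disjoint copy of a directed pairing `M` on `S`, as a directed pairing
on `S × Fin D`: its pairs are `(((M i).1, d), ((M i).2, d))` for `i : Fin n`, `d : Fin D`. -/
def copyPairing {S : Type*} {n : ℕ} (D : ℕ) (M : Fin n → S × S) :
    Fin (n * D) → (S × Fin D) × (S × Fin D) :=
  fun i =>
    let p := finProdFinEquiv.symm i
    (((M p.1).1, p.2), ((M p.1).2, p.2))

/-! The sign `ε` is a cocycle, so `ε(M₀^{(D)}, E) = ε(M₀^{(D)}, M_ref^{(D)}) · ε(M_ref^{(D)}, E)`.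
The permutation relating the two copied pairings acts as `fl_{M_ref} ∘ fl_{M₀}⁻¹` on each of the
`D` copies of `S`, so its sign is `ε(M₀, M_ref)^D = ε(M_ref, M₀)^D`. -/

section

variable {S : Type*} {n : ℕ}

theorem pairingFlatten_copyPairing_apply (D : ℕ) {M : Fin n → S × S} (h : IsDirectedPairing M)
    (hc : IsDirectedPairing (copyPairing D M)) (i : Fin (n * D)) (b : Fin 2) :
    pairingFlatten hc (i, b) =
      (pairingFlatten h ((finProdFinEquiv.symm i).1, b), (finProdFinEquiv.symm i).2) := by
  fin_cases b <;> rfl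

theorem pairingFlatten_copyPairing_symm_trans (D : ℕ) {M₁ M₂ : Fin n → S × S}
    (h₁ : IsDirectedPairing M₁) (h₂ : IsDirectedPairing M₂)
    (hc₁ : IsDirectedPairing (copyPairing D M₁)) (hc₂ : IsDirectedPairing (copyPairing D M₂)) :
    (pairingFlatten hc₁).symm.trans (pairingFlatten hc₂) =
      ((pairingFlatten h₁).symm.trans (pairingFlatten h₂)).prodCongr (Equiv.refl (Fin D)) := by
  ext1 x
  obtain ⟨⟨i, b⟩, rfl⟩ := (pairingFlatten hc₁).surjective x
  rw [Equiv.trans_apply, Equiv.symm_apply_apply, pairingFlatten_copyPairing_apply D h₁ hc₁,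
    pairingFlatten_copyPairing_apply D h₂ hc₂, Equiv.prodCongr_apply, Prod.map_apply,
    Equiv.trans_apply, Equiv.symm_apply_apply, Equiv.refl_apply]

variable [Fintype S] [DecidableEq S]

theorem pairingSign_mul_pairingSign {M₁ M₂ M₃ : Fin n → S × S} (h₁ : IsDirectedPairing M₁)
    (h₂ : IsDirectedPairing M₂) (h₃ : IsDirectedPairing M₃) :
    pairingSign h₁ h₂ * pairingSign h₂ h₃ = pairingSign h₁ h₃ := by
  rw [pairingSign, pairingSign, pairingSign, mul_comm, ← Equiv.Perm.sign_trans]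
  congr 1
  ext x
  simp

theorem pairingSign_comm {M₁ M₂ : Fin n → S × S} (h₁ : IsDirectedPairing M₁)
    (h₂ : IsDirectedPairing M₂) : pairingSign h₂ h₁ = pairingSign h₁ h₂ := by
  rw [pairingSign, pairingSign, ← Equiv.Perm.sign_symm]
  rfl

theorem pairingSign_copyPairing (D : ℕ) {M₁ M₂ : Fin n → S × S}
    (h₁ : IsDirectedPairing M₁) (h₂ : IsDirectedPairing M₂)
    (hc₁ : IsDirectedPairing (copyPairing D M₁)) (hc₂ : IsDirectedPairing (copyPairing D M₂)) :
    pairingSign hc₁ hc₂ = pairingSign h₁ h₂ ^ D := by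
  rw [pairingSign, pairingFlatten_copyPairing_symm_trans D h₁ h₂, Equiv.prodCongr_refl_right,
    Equiv.Perm.sign_prodCongrLeft, Finset.prod_const, Finset.card_univ, Fintype.card_fin,
    pairingSign]

end

/-- Reformulation of signs used in the Wick expansion:
`ε(M_ref^{(D)}, E) · ε(M_ref, M₀)^D = ε(M₀^{(D)}, E)` for any directed pairing `E`
on `S × Fin D`. -/
theorem pairingSign_wick_reform {S : Type*} [Fintype S] [DecidableEq S] {p : ℕ} (D : ℕ)
    (Mref M₀ : Fin p → S × S) (E : Fin (p * D) → (S × Fin D) × (S × Fin D))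
    (href : IsDirectedPairing Mref) (h₀ : IsDirectedPairing M₀)
    (hE : IsDirectedPairing E)
    (hcref : IsDirectedPairing (copyPairing D Mref))
    (hc₀ : IsDirectedPairing (copyPairing D M₀)) :
    pairingSign hcref hE * (pairingSign href h₀) ^ D = pairingSign hc₀ hE := by
  rw [← pairingSign_mul_pairingSign hc₀ hcref hE, pairingSign_copyPairing D h₀ href,
    pairingSign_comm h₀ href, mul_comm]
end

section
/- Let D ∈ ℕ be even (D the parity relevant for bosonic invariants in the graded model with b = 1). Then for any two directed pairings M₁, M₂ on a finite set S with 2p elements, and any directed pairing E on S × Fin D, one has ε(M₁^{(D)}, E) = ε(M₂^{(D)}, E); i.e. the sign entering the definition of a tensor invariant is independent of the chosen reference pairing of the tensors when D is even. -/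
/-- For even `D`, the sign `ε(M^{(D)}, E)` is independent of the directed pairing `M`:
the sign entering the definition of a tensor invariant does not depend on the chosen
reference pairing of the tensors when `D` is even. -/
theorem pairingSign_copy_even_indep {S : Type*} [Fintype S] [DecidableEq S] {p : ℕ}
    (D : ℕ) (hD : Even D) (M₁ M₂ : Fin p → S × S)
    (E : Fin (p * D) → (S × Fin D) × (S × Fin D))
    (h₁ : IsDirectedPairing M₁) (h₂ : IsDirectedPairing M₂)
    (hE : IsDirectedPairing E)
    (hc₁ : IsDirectedPairing (copyPairing D M₁))
    (hc₂ : IsDirectedPairing (copyPairing D M₂)) :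
    pairingSign hc₁ hE = pairingSign hc₂ hE := by
  classical
  set σ : Equiv.Perm S := (pairingFlatten h₁).symm.trans (pairingFlatten h₂) with hσ
  have copy_eq : ∀ (M : Fin p → S × S) (x : Fin (p * D) × Fin 2),
      pairingListing (copyPairing D M) x
        = (pairingListing M ((finProdFinEquiv.symm x.1).1, x.2),
            (finProdFinEquiv.symm x.1).2) := by
    intro M x
    by_cases h : x.2 = 0 <;> simp [pairingListing, copyPairing, h]
  have main : ∀ x : Fin (p * D) × Fin 2,
      (Equiv.prodCongrLeft fun _ : Fin D => σ) (pairingFlatten hc₁ x)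
        = pairingFlatten hc₂ x := by
    intro x
    show (Equiv.prodCongrLeft fun _ : Fin D => σ) (pairingListing (copyPairing D M₁) x)
        = pairingListing (copyPairing D M₂) x
    rw [copy_eq, copy_eq]
    simp only [Equiv.prodCongrLeft_apply]
    congr 1
    show pairingFlatten h₂ ((pairingFlatten h₁).symm
        (pairingFlatten h₁ ((finProdFinEquiv.symm x.1).1, x.2))) = _
    rw [Equiv.symm_apply_apply]
    rfl
  have key : (pairingFlatten hc₁).symm.trans (pairingFlatten hc₂)
      = Equiv.prodCongrLeft fun _ : Fin D => σ := by
    refine Equiv.ext fun y => ?_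
    simp only [Equiv.trans_apply]
    rw [← main ((pairingFlatten hc₁).symm y), Equiv.apply_symm_apply]
  have comp : (pairingFlatten hc₁).symm.trans (pairingFlatten hE)
      = ((pairingFlatten hc₁).symm.trans (pairingFlatten hc₂)).trans
          ((pairingFlatten hc₂).symm.trans (pairingFlatten hE)) := by
    refine Equiv.ext fun y => by simp
  have hsign : Equiv.Perm.sign (Equiv.prodCongrLeft fun _ : Fin D => σ) = 1 := by
    rw [Equiv.Perm.sign_prodCongrLeft]
    simp only [Finset.prod_const, Finset.card_univ, Fintype.card_fin]
    obtain ⟨k, rfl⟩ := hD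
    rw [← two_mul, pow_mul, Int.units_sq, one_pow]
  unfold pairingSign
  rw [comp, key]
  rw [show (Equiv.prodCongrLeft fun _ : Fin D => σ).trans
        ((pairingFlatten hc₂).symm.trans (pairingFlatten hE))
      = ((pairingFlatten hc₂).symm.trans (pairingFlatten hE))
          * (Equiv.prodCongrLeft fun _ : Fin D => σ) from rfl]
  rw [map_mul, hsign, mul_one]
end

section
/- (Property 4 of the sign of directed pairings, single-face case.) Let k ≥ 1 and let ρ, σ : Fin k → Bool. On the set ZMod (2k), define the directed pairing M₁ whose i-th pair is (2i, 2i+1) if ρ i = true and (2i+1, 2i) otherwise, and the directed pairing M₂ whose i-th pair is (2i+1, 2i+2) if σ i = true and (2i+2, 2i+1) otherwise (arithmetic in ZMod (2k)); their union forms a single alternating cycle. Let r = #{i : ρ i = true} + #{i : σ i = true} be the number of edges oriented in the forward direction around the cycle. Then ε(M₁, M₂) = (−1)^{1+r}; in particular ε(M₁, M₂) = −1 if and only if the face is even (r is even). -/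
/-- The directed pairing on `ZMod (2k)` whose `i`-th pair is `(2i, 2i+1)` if `ρ i = true`
and `(2i+1, 2i)` otherwise. -/
def cycleFirst (k : ℕ) (ρ : Fin k → Bool) : Fin k → ZMod (2 * k) × ZMod (2 * k) :=
  fun i =>
    if ρ i then (((2 * (i : ℕ) : ℕ) : ZMod (2 * k)), ((2 * (i : ℕ) + 1 : ℕ) : ZMod (2 * k)))
    else (((2 * (i : ℕ) + 1 : ℕ) : ZMod (2 * k)), ((2 * (i : ℕ) : ℕ) : ZMod (2 * k)))

/-- The directed pairing on `ZMod (2k)` whose `i`-th pair is `(2i+1, 2i+2)` if `σ i = true`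
and `(2i+2, 2i+1)` otherwise (arithmetic mod `2k`). -/
def cycleSecond (k : ℕ) (σ : Fin k → Bool) : Fin k → ZMod (2 * k) × ZMod (2 * k) :=
  fun i =>
    if σ i then (((2 * (i : ℕ) + 1 : ℕ) : ZMod (2 * k)), ((2 * (i : ℕ) + 2 : ℕ) : ZMod (2 * k)))
    else (((2 * (i : ℕ) + 2 : ℕ) : ZMod (2 * k)), ((2 * (i : ℕ) + 1 : ℕ) : ZMod (2 * k)))


noncomputable def zmodFinEquiv (n : ℕ) [NeZero n] : Fin n ≃ ZMod n where
  toFun i := ((i : ℕ) : ZMod n)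
  invFun x := ⟨x.val, x.val_lt⟩
  left_inv i := by ext; simp [ZMod.val_natCast, Nat.mod_eq_of_lt i.isLt]
  right_inv x := ZMod.natCast_rightInverse x

noncomputable def baseEquiv (k : ℕ) [NeZero (2 * k)] : Fin k × Fin 2 ≃ ZMod (2 * k) :=
  (finProdFinEquiv.trans (finCongr (mul_comm k 2))).trans (zmodFinEquiv (2 * k))

lemma baseEquiv_apply (k : ℕ) [NeZero (2 * k)] (i : Fin k) (j : Fin 2) :
    baseEquiv k (i, j) = (((j : ℕ) + 2 * (i : ℕ) : ℕ) : ZMod (2 * k)) := by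
  simp [baseEquiv, zmodFinEquiv, finProdFinEquiv]

def boolPerm (b : Bool) : Equiv.Perm (Fin 2) := if b then Equiv.refl _ else Equiv.swap 0 1

noncomputable def tEquiv {k : ℕ} (ρ : Fin k → Bool) : Equiv.Perm (Fin k × Fin 2) :=
  Equiv.prodCongrRight (fun i => boolPerm (ρ i))

lemma flatten_first (k : ℕ) [NeZero (2 * k)] (ρ : Fin k → Bool)
    (h₁ : IsDirectedPairing (cycleFirst k ρ)) :
    pairingFlatten h₁ = (tEquiv ρ).trans (baseEquiv k) := by
  apply Equiv.coe_fn_injective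
  funext p
  obtain ⟨i, j⟩ := p
  show pairingListing (cycleFirst k ρ) (i, j) = _
  simp only [Equiv.trans_apply, tEquiv, Equiv.prodCongrRight_apply, boolPerm]
  cases hρ : ρ i <;> fin_cases j <;>
    simp [pairingListing, cycleFirst, hρ, baseEquiv_apply, Equiv.swap_apply_left,
      Equiv.swap_apply_right] <;> push_cast <;> ring_nf

lemma flatten_second (k : ℕ) [NeZero (2 * k)] (σ : Fin k → Bool)
    (h₂ : IsDirectedPairing (cycleSecond k σ)) :
    pairingFlatten h₂ = ((tEquiv σ).trans (baseEquiv k)).trans (Equiv.addRight 1) := by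
  apply Equiv.coe_fn_injective
  funext p
  obtain ⟨i, j⟩ := p
  show pairingListing (cycleSecond k σ) (i, j) = _
  simp only [Equiv.trans_apply, tEquiv, Equiv.prodCongrRight_apply, boolPerm,
    Equiv.coe_addRight]
  cases hσ : σ i <;> fin_cases j <;>
    simp [pairingListing, cycleSecond, hσ, baseEquiv_apply, Equiv.swap_apply_left,
      Equiv.swap_apply_right] <;> push_cast <;> ring_nf

lemma sign_tEquiv {k : ℕ} (ρ : Fin k → Bool) :
    Equiv.Perm.sign (tEquiv ρ) = (-1) ^ (Finset.univ.filter fun i => ρ i = false).card := by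
  rw [tEquiv, Equiv.Perm.sign_prodCongrRight]
  rw [← Finset.prod_filter_mul_prod_filter_not Finset.univ (fun i => ρ i = false)]
  have h1 : ∀ i ∈ Finset.univ.filter (fun i => ρ i = false),
      Equiv.Perm.sign (boolPerm (ρ i)) = -1 := by
    intro i hi
    simp only [Finset.mem_filter] at hi
    simp [boolPerm, hi.2, Equiv.Perm.sign_swap (by decide : (0 : Fin 2) ≠ 1)]
  have h2 : ∀ i ∈ Finset.univ.filter (fun i => ¬ρ i = false),
      Equiv.Perm.sign (boolPerm (ρ i)) = 1 := by
    intro i hi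
    simp only [Finset.mem_filter] at hi
    have : ρ i = true := by simpa using hi.2
    simp [boolPerm, this]
  rw [Finset.prod_congr rfl h1, Finset.prod_congr rfl h2]
  simp

lemma sign_addRight (n : ℕ) [NeZero n] :
    Equiv.Perm.sign (Equiv.addRight (1 : ZMod n)) = (-1) ^ (n - 1) := by
  rcases n with _ | m
  · exact absurd rfl (NeZero.ne 0)
  · have key : Equiv.addRight (1 : ZMod (m + 1)) =
        (zmodFinEquiv (m + 1)).permCongr (finRotate (m + 1)) := by
      apply Equiv.coe_fn_injective
      funext x
      simp only [Equiv.coe_addRight, Equiv.permCongr_apply, finRotate_succ_apply, zmodFinEquiv,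
        Equiv.coe_fn_mk, Equiv.coe_fn_symm_mk]
      rw [Fin.val_add, ZMod.natCast_mod]
      push_cast
      rw [ZMod.natCast_rightInverse x]
      have h1 : (((1 : Fin (m + 1)).val : ℕ) : ZMod (m + 1)) = 1 := by
        rw [Fin.val_one', ZMod.natCast_mod, Nat.cast_one]
      rw [h1]
    rw [key, Equiv.Perm.sign_permCongr, sign_finRotate]

/-- Property 4, single-face case: for the two directed pairings forming one alternating
cycle on `ZMod (2k)`, with `r` forward-oriented edges, one has `ε(M₁, M₂) = (−1)^{1+r}`;
in particular `ε(M₁, M₂) = −1` iff the face is even (`r` even). -/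
theorem pairingSign_single_cycle (k : ℕ) [NeZero (2 * k)] (hk : 1 ≤ k)
    (ρ σ : Fin k → Bool)
    (h₁ : IsDirectedPairing (cycleFirst k ρ)) (h₂ : IsDirectedPairing (cycleSecond k σ)) :
    pairingSign h₁ h₂ =
      (-1) ^ (1 + ((Finset.univ.filter fun i => ρ i = true).card +
        (Finset.univ.filter fun i => σ i = true).card)) ∧
    (pairingSign h₁ h₂ = -1 ↔
      Even ((Finset.univ.filter fun i => ρ i = true).card +
        (Finset.univ.filter fun i => σ i = true).card)) := by
  classical
  set rρ := (Finset.univ.filter fun i => ρ i = true).card with hrρdef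
  set rσ := (Finset.univ.filter fun i => σ i = true).card with hrσdef
  have pow_parity : ∀ a b : ℕ, a % 2 = b % 2 → ((-1 : ℤˣ)) ^ a = (-1) ^ b := by
    intro a b h
    rw [← Nat.div_add_mod a 2, ← Nat.div_add_mod b 2, pow_add, pow_add, pow_mul, pow_mul]
    simp [neg_one_sq, h]
  have hfρ : (Finset.univ.filter fun i => ρ i = false).card + rρ = k := by
    have h0 := Finset.card_filter_add_card_filter_not
      (s := (Finset.univ : Finset (Fin k))) (p := fun i => ρ i = true)
    have h1 : (Finset.univ.filter fun i : Fin k => ¬ ρ i = true)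
        = (Finset.univ.filter fun i => ρ i = false) := by
      apply Finset.filter_congr; intro i _; simp
    rw [h1] at h0
    simpa [Nat.add_comm, Fintype.card_fin] using h0
  have hfσ : (Finset.univ.filter fun i => σ i = false).card + rσ = k := by
    have h0 := Finset.card_filter_add_card_filter_not
      (s := (Finset.univ : Finset (Fin k))) (p := fun i => σ i = true)
    have h1 : (Finset.univ.filter fun i : Fin k => ¬ σ i = true)
        = (Finset.univ.filter fun i => σ i = false) := by
      apply Finset.filter_congr; intro i _; simp
    rw [h1] at h0
    simpa [Nat.add_comm, Fintype.card_fin] using h0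
  have key : pairingSign h₁ h₂ = (-1) ^ (1 + (rρ + rσ)) := by
    rw [pairingSign, flatten_first k ρ h₁, flatten_second k σ h₂]
    have heq : ((tEquiv ρ).trans (baseEquiv k)).symm.trans
          (((tEquiv σ).trans (baseEquiv k)).trans (Equiv.addRight 1))
        = ((baseEquiv k).permCongr ((tEquiv ρ).symm.trans (tEquiv σ))).trans
          (Equiv.addRight 1) := by
      ext x
      simp [Equiv.permCongr_apply]
    rw [heq]
    have hs : ∀ {α : Type} [DecidableEq α] [Fintype α] (p q : Equiv.Perm α),
        Equiv.Perm.sign (p.trans q) = Equiv.Perm.sign p * Equiv.Perm.sign q := by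
      intro α _ _ p q
      rw [show p.trans q = q * p from rfl, map_mul]
      exact mul_comm _ _
    rw [hs, Equiv.Perm.sign_permCongr, hs, sign_addRight]
    have hsymm : Equiv.Perm.sign (tEquiv ρ).symm = Equiv.Perm.sign (tEquiv ρ) :=
      Equiv.Perm.sign_inv (tEquiv ρ)
    rw [hsymm, sign_tEquiv, sign_tEquiv, ← pow_add, ← pow_add]
    apply pow_parity
    omega
  refine ⟨key, ?_⟩
  rw [key]
  rw [pow_add, pow_one]
  constructor
  · intro h
    have h1 : ((-1 : ℤˣ)) ^ (rρ + rσ) = 1 :=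
      mul_left_cancel (a := (-1 : ℤˣ)) (h.trans (mul_one (-1 : ℤˣ)).symm)
    by_contra hodd
    have : Odd (rρ + rσ) := Nat.not_even_iff_odd.mp hodd
    rw [this.neg_one_pow] at h1
    exact absurd h1 (by decide)
  · intro h
    rw [h.neg_one_pow]
    simp
end

section
/- (Property 4 of the sign of directed pairings, general normal form.) Let m ≥ 1, let k : Fin m → ℕ with k c ≥ 1 for all c, and let ρ_c, σ_c : Fin (k c) → Bool for each c. On the finite set S = Σ (c : Fin m), ZMod (2 · k c), let M₁ be the directed pairing whose pairs in component c are (2i, 2i+1) if ρ_c i = true and (2i+1, 2i) otherwise, and M₂ the directed pairing whose pairs in component c are (2i+1, 2i+2) if σ_c i = true and (2i+2, 2i+1) otherwise (arithmetic in ZMod (2 · k c)); the union of M₁ and M₂ decomposes into the m alternating cycles given by the components. For each c let r_c = #{i : ρ_c i = true} + #{i : σ_c i = true}, and let F_even = #{c : r_c is even} be the number of even faces. Then ε(M₁, M₂) = (−1)^{F_even}. -/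
/-- On `S = Σ c, ZMod (2 · k c)`, the directed pairing whose pairs in component `c` are
`(2i, 2i+1)` if `ρ c i = true` and `(2i+1, 2i)` otherwise; the pairs are listed via an
enumeration `e : Fin (∑ c, k c) ≃ Σ c, Fin (k c)`. -/
def multiCycleFirst (m : ℕ) (k : Fin m → ℕ)
    (e : Fin (∑ c, k c) ≃ (c : Fin m) × Fin (k c))
    (ρ : (c : Fin m) → Fin (k c) → Bool) :
    Fin (∑ c, k c) →
      ((c : Fin m) × ZMod (2 * k c)) × ((c : Fin m) × ZMod (2 * k c)) :=
  fun idx =>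
    let q := e idx
    if ρ q.1 q.2 then
      (⟨q.1, ((2 * (q.2 : ℕ) : ℕ) : ZMod (2 * k q.1))⟩,
       ⟨q.1, ((2 * (q.2 : ℕ) + 1 : ℕ) : ZMod (2 * k q.1))⟩)
    else
      (⟨q.1, ((2 * (q.2 : ℕ) + 1 : ℕ) : ZMod (2 * k q.1))⟩,
       ⟨q.1, ((2 * (q.2 : ℕ) : ℕ) : ZMod (2 * k q.1))⟩)

/-- On `S = Σ c, ZMod (2 · k c)`, the directed pairing whose pairs in component `c` are
`(2i+1, 2i+2)` if `σ c i = true` and `(2i+2, 2i+1)` otherwise (arithmetic mod `2 · k c`). -/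
def multiCycleSecond (m : ℕ) (k : Fin m → ℕ)
    (e : Fin (∑ c, k c) ≃ (c : Fin m) × Fin (k c))
    (σ : (c : Fin m) → Fin (k c) → Bool) :
    Fin (∑ c, k c) →
      ((c : Fin m) × ZMod (2 * k c)) × ((c : Fin m) × ZMod (2 * k c)) :=
  fun idx =>
    let q := e idx
    if σ q.1 q.2 then
      (⟨q.1, ((2 * (q.2 : ℕ) + 1 : ℕ) : ZMod (2 * k q.1))⟩,
       ⟨q.1, ((2 * (q.2 : ℕ) + 2 : ℕ) : ZMod (2 * k q.1))⟩)
    else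
      (⟨q.1, ((2 * (q.2 : ℕ) + 2 : ℕ) : ZMod (2 * k q.1))⟩,
       ⟨q.1, ((2 * (q.2 : ℕ) + 1 : ℕ) : ZMod (2 * k q.1))⟩)

/-!
Enumerate `S = Σ c, ZMod (2 k_c)` by `(idx, b) ↦ ⟨c, 2i + b⟩`, where `e idx = ⟨c, i⟩`. The listing
of `M₁` is this enumeration precomposed with the flips of the pairs where `ρ` is `false`; the
listing of `M₂` is the same with the flips of `σ`, followed by the rotation `x ↦ x + 1` of every
component. So `ε(M₁, M₂)` is the product of the signs of the flips and of the rotation. The rotation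
of a cycle of even length `2 k_c` is odd, so component `c` contributes
`(-1) ^ (1 + #{i | ¬ρ_c i} + #{i | ¬σ_c i})`, which is `-1` exactly when `r_c` is even.
-/

open Equiv Equiv.Perm Finset

theorem Equiv.Perm.sigmaCongrRight_mulSingle {ι : Type*} [DecidableEq ι] {β : ι → Type*}
    (i : ι) (τ : Perm (β i)) :
    Perm.sigmaCongrRight (Pi.mulSingle i τ) = τ.extendDomain (sigmaSubtype i).symm := by
  ext ⟨j, b⟩ : 1
  by_cases h : j = i
  · subst h
    rw [extendDomain_apply_subtype τ (sigmaSubtype j).symm (b := ⟨j, b⟩) rfl]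
    simp [sigmaSubtype]
  · rw [extendDomain_apply_not_subtype τ (sigmaSubtype i).symm (b := ⟨j, b⟩) h]
    simp [Pi.mulSingle_eq_of_ne h]

theorem Equiv.Perm.sign_sigmaCongrRight {ι : Type*} [Fintype ι] [DecidableEq ι] {β : ι → Type*}
    [∀ i, Fintype (β i)] [∀ i, DecidableEq (β i)] (σ : ∀ i, Perm (β i)) :
    sign (Perm.sigmaCongrRight σ) = ∏ i, sign (σ i) := by
  have key : sign.comp (sigmaCongrRightHom β) = ∏ i, sign.comp (Pi.evalMonoidHom _ i) := by
    refine MonoidHom.pi_ext fun i τ => ?_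
    rw [MonoidHom.comp_apply, sigmaCongrRightHom_apply, sigmaCongrRight_mulSingle,
      sign_extendDomain, MonoidHom.finsetProd_apply]
    simp only [MonoidHom.comp_apply, Pi.evalMonoidHom_apply]
    rw [Fintype.prod_congr _ _ (Pi.apply_mulSingle (fun _ => sign) (fun _ => map_one sign) i τ),
      Fintype.prod_pi_mulSingle']
  simpa [MonoidHom.finsetProd_apply] using DFunLike.congr_fun key σ

theorem ZMod.sign_addRight_one (N : ℕ) [NeZero N] :
    sign (Equiv.addRight (1 : ZMod N)) = (-1) ^ (N - 1) := by
  obtain ⟨n, rfl⟩ : ∃ n, N = n + 1 := ⟨N - 1, (Nat.succ_pred_eq_of_pos (NeZero.pos N)).symm⟩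
  rw [← sign_finRotate]
  exact sign_eq_sign_of_equiv _ _ (Equiv.cast rfl) fun x => (finRotate_apply x).symm

theorem pairingSign_eq_of_listing {S : Type*} [Fintype S] [DecidableEq S] {n : ℕ}
    {M₁ M₂ : Fin n → S × S} (h₁ : IsDirectedPairing M₁) (h₂ : IsDirectedPairing M₂)
    (π : Perm S) (u₁ u₂ : Perm (Fin n × Fin 2))
    (h : ∀ p, pairingListing M₂ (u₂ p) = π (pairingListing M₁ (u₁ p))) :
    pairingSign h₁ h₂ = sign π * sign u₁ * sign u₂ := by
  set f₁ := pairingFlatten h₁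
  have hf₂ : pairingFlatten h₂ = (u₁ * u₂⁻¹).trans (f₁.trans π) := by
    ext q
    have hq := h (u₂⁻¹ q)
    rw [coe_inv, apply_symm_apply] at hq
    exact hq
  have hconj : f₁.symm.trans (pairingFlatten h₂) = π * f₁.permCongr (u₁ * u₂⁻¹) := by
    ext s
    simp [hf₂, Equiv.permCongr_apply]
  rw [pairingSign, hconj, map_mul, sign_permCongr, map_mul, sign_inv, mul_assoc]

theorem Fintype.prod_ite_one_neg_one {ι : Type*} [Fintype ι] (f : ι → Bool) :
    ∏ i, (if f i then (1 : ℤˣ) else -1) = (-1) ^ (#{i | f i = true} + Fintype.card ι) := by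
  rw [prod_ite, prod_const_one, prod_const, one_mul]
  refine neg_one_pow_congr ?_
  rw [← card_univ, ← card_filter_add_card_filter_not (s := univ) (fun i => f i = true)]
  simp only [Nat.even_add]
  tauto

def orientPerm (b : Bool) : Perm (Fin 2) :=
  if b then 1 else swap 0 1

theorem sign_orientPerm (b : Bool) : sign (orientPerm b) = if b then 1 else -1 := by
  cases b <;> simp [orientPerm]

section MultiCycle

variable {m : ℕ} {k : Fin m → ℕ} (e : Fin (∑ c, k c) ≃ (c : Fin m) × Fin (k c))
  (τ : (c : Fin m) → Fin (k c) → Bool)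

theorem pairingListing_multiCycleFirst (idx : Fin (∑ c, k c)) (b : Fin 2) :
    pairingListing (multiCycleFirst m k e τ) (idx, orientPerm (τ (e idx).1 (e idx).2) b) =
      ⟨(e idx).1, ((2 * (e idx).2 + b : ℕ) : ZMod (2 * k (e idx).1))⟩ := by
  cases h : τ (e idx).1 (e idx).2 <;> fin_cases b <;>
    simp [pairingListing, multiCycleFirst, orientPerm, h]

theorem pairingListing_multiCycleSecond (idx : Fin (∑ c, k c)) (b : Fin 2) :
    pairingListing (multiCycleSecond m k e τ) (idx, orientPerm (τ (e idx).1 (e idx).2) b) =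
      ⟨(e idx).1, ((2 * (e idx).2 + b : ℕ) : ZMod (2 * k (e idx).1)) + 1⟩ := by
  cases h : τ (e idx).1 (e idx).2 <;> fin_cases b <;>
    simp [pairingListing, multiCycleSecond, orientPerm, h] <;> ring

end MultiCycle

theorem pairingSign_multi_cycle_general (m : ℕ) (k : Fin m → ℕ) (hk : ∀ c, 1 ≤ k c)
    (e : Fin (∑ c, k c) ≃ (c : Fin m) × Fin (k c))
    (ρ σ : (c : Fin m) → Fin (k c) → Bool) :
    letI : ∀ c, NeZero (2 * k c) := fun c =>
      ⟨Nat.mul_ne_zero two_ne_zero (Nat.one_le_iff_ne_zero.mp (hk c))⟩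
    ∀ (h₁ : IsDirectedPairing (multiCycleFirst m k e ρ))
      (h₂ : IsDirectedPairing (multiCycleSecond m k e σ)),
      pairingSign h₁ h₂ =
        (-1) ^ (Finset.univ.filter fun c : Fin m =>
          Even ((Finset.univ.filter fun i => ρ c i = true).card +
            (Finset.univ.filter fun i => σ c i = true).card)).card := by
  intro h₁ h₂
  have (c : Fin m) : NeZero (2 * k c) := ⟨by have := hk c; omega⟩
  let orient (τ : (c : Fin m) → Fin (k c) → Bool) : Perm (Fin (∑ c, k c) × Fin 2) :=
    prodCongrRight fun idx => orientPerm (τ (e idx).1 (e idx).2)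
  rw [pairingSign_eq_of_listing h₁ h₂ (Perm.sigmaCongrRight fun c => Equiv.addRight 1)
    (orient ρ) (orient σ) fun ⟨idx, b⟩ => by
      simp only [orient, prodCongrRight_apply, pairingListing_multiCycleFirst,
        pairingListing_multiCycleSecond]
      rfl]
  have hface (c : Fin m) (a b : ℕ) :
      (-1 : ℤˣ) ^ (2 * k c - 1) * (-1) ^ (a + k c) * (-1) ^ (b + k c) =
        if Even (a + b) then -1 else 1 := by
    rw [← pow_add, ← pow_add, neg_one_pow_eq_ite]
    have : Even (2 * k c - 1 + (a + k c) + (b + k c)) ↔ ¬Even (a + b) := by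
      simp only [Nat.even_iff]; have := hk c; omega
    by_cases h : Even (a + b) <;> simp [h, this]
  simp only [orient, sign_sigmaCongrRight, ZMod.sign_addRight_one, sign_prodCongrRight,
    sign_orientPerm]
  rw [e.prod_comp (fun q => if ρ q.1 q.2 then 1 else -1),
    e.prod_comp (fun q => if σ q.1 q.2 then 1 else -1), Fintype.prod_sigma, Fintype.prod_sigma,
    ← prod_mul_distrib, ← prod_mul_distrib]
  simp only [Fintype.prod_ite_one_neg_one, Fintype.card_fin, hface]
  rw [prod_ite, prod_const, prod_const_one, mul_one]

/-- Property 4, general normal form: the union of `M₁` and `M₂` decomposes into the `m`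
alternating cycles given by the components, and `ε(M₁, M₂) = (−1)^{F_even}` where
`F_even` is the number of even faces, i.e. of components `c` for which
`r_c = #{i : ρ_c i} + #{i : σ_c i}` is even. -/
theorem pairingSign_multi_cycle (m : ℕ) (hm : 1 ≤ m) (k : Fin m → ℕ) (hk : ∀ c, 1 ≤ k c)
    (e : Fin (∑ c, k c) ≃ (c : Fin m) × Fin (k c))
    (ρ σ : (c : Fin m) → Fin (k c) → Bool) :
    letI : ∀ c, NeZero (2 * k c) := fun c =>
      ⟨Nat.mul_ne_zero two_ne_zero (Nat.one_le_iff_ne_zero.mp (hk c))⟩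
    ∀ (h₁ : IsDirectedPairing (multiCycleFirst m k e ρ))
      (h₂ : IsDirectedPairing (multiCycleSecond m k e σ)),
      pairingSign h₁ h₂ =
        (-1) ^ (Finset.univ.filter fun c : Fin m =>
          Even ((Finset.univ.filter fun i => ρ c i = true).card +
            (Finset.univ.filter fun i => σ c i = true).card)).card :=
  pairingSign_multi_cycle_general m k hk e ρ σ
end

section
/- Let b ∈ {0, 1} and let g be a square matrix over ℝ indexed by a type ι satisfying the graded symmetry gᵀ = (−1)^b · g (g symmetric if b = 0, antisymmetric if b = 1). Let S be a finite set with 2n elements, φ : S → ι an arbitrary index assignment, M_ref a directed pairing on S, and let E, E' be two directed pairings on S with the same underlying unordered pairing (E' is obtained from E by reordering its pairs and reversing the orientation of some of them). Then ε(E, M_ref)^b · ∏_{(k,l) pair of E} g (φ k) (φ l) = ε(E', M_ref)^b · ∏_{(k,l) pair of E'} g (φ k) (φ l); i.e. the sign-weighted product of bilinear-form contractions defining a tensor invariant is independent of the chosen orientation of the stranded graph. -/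
/-!
The listing of `E'` is the listing of `E` composed with a permutation `σ` of `Fin n × Fin 2`
that permutes the pairs by `τ` and swaps the two slots of each reversed pair. Moving whole pairs
is an even permutation, so `ε(E', M_ref) = ε(E, M_ref) · u` with `u = (-1)^(#reversed pairs)`;
by the graded symmetry each reversed pair also multiplies the product of contractions by
`(-1)^b`, so the right-hand side picks up `u^b · u^b = 1`.
-/

open Equiv Equiv.Perm

section GradedSymmetric

variable {ι : Type*} {b : ℕ} {g : Matrix ι ι ℝ}

lemma Matrix.apply_swap_of_transpose_eq (hg : g.transpose = (-1 : ℝ) ^ b • g) (i j : ι) :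
    g j i = (-1) ^ b * g i j := by
  simpa using congrFun (congrFun hg i) j

lemma Matrix.apply_perm_two_of_transpose_eq (hg : g.transpose = (-1 : ℝ) ^ b • g)
    (x : Fin 2 → ι) (t : Perm (Fin 2)) :
    g (x (t 0)) (x (t 1)) = ((sign t : ℤ) : ℝ) ^ b * g (x 0) (x 1) := by
  obtain rfl | rfl : t = 1 ∨ t = Equiv.swap 0 1 := by revert t; decide
  · simp
  · simpa using Matrix.apply_swap_of_transpose_eq hg (x 0) (x 1)

end GradedSymmetric

section DirectedPairing

variable {S : Type*} {n : ℕ}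

@[simp]
lemma pairingListing_zero (M : Fin n → S × S) (i : Fin n) : pairingListing M (i, 0) = (M i).1 :=
  rfl

@[simp]
lemma pairingListing_one (M : Fin n → S × S) (i : Fin n) : pairingListing M (i, 1) = (M i).2 :=
  rfl

def reorientPerm (τ : Perm (Fin n)) (t : Fin n → Perm (Fin 2)) : Perm (Fin n × Fin 2) :=
  (prodCongrRight t).trans (prodCongrLeft fun _ => τ)

@[simp]
lemma reorientPerm_apply (τ : Perm (Fin n)) (t : Fin n → Perm (Fin 2)) (p : Fin n × Fin 2) :
    reorientPerm τ t p = (τ p.1, t p.1 p.2) :=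
  rfl

lemma sign_reorientPerm (τ : Perm (Fin n)) (t : Fin n → Perm (Fin 2)) :
    sign (reorientPerm τ t) = ∏ i, sign (t i) := by
  rw [reorientPerm, sign_trans, sign_prodCongrRight, sign_prodCongrLeft]
  simp

lemma exists_pairingListing_eq_comp_reorientPerm {E E' : Fin n → S × S} (τ : Perm (Fin n))
    (h : ∀ i, E' i = E (τ i) ∨ E' i = ((E (τ i)).2, (E (τ i)).1)) :
    ∃ t, pairingListing E' = pairingListing E ∘ reorientPerm τ t := by
  have : ∀ i, ∃ s : Perm (Fin 2), ∀ j, pairingListing E' (i, j) = pairingListing E (τ i, s j) := by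
    intro i
    rcases h i with h | h
    · exact ⟨1, fun j => by fin_cases j <;> simp [h]⟩
    · exact ⟨Equiv.swap 0 1, fun j => by fin_cases j <;> simp [h]⟩
  choose t ht using this
  exact ⟨t, funext fun p => ht p.1 p.2⟩

lemma pairingSign_eq_of_pairingListing_eq_comp [Fintype S] [DecidableEq S]
    {M₁ M₁' M₂ : Fin n → S × S} (h₁ : IsDirectedPairing M₁) (h₁' : IsDirectedPairing M₁')
    (h₂ : IsDirectedPairing M₂) {σ : Perm (Fin n × Fin 2)}
    (hσ : pairingListing M₁' = pairingListing M₁ ∘ σ) :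
    pairingSign h₁' h₂ = sign σ * pairingSign h₁ h₂ := by
  have hflat : pairingFlatten h₁' = σ.trans (pairingFlatten h₁) := Equiv.coe_fn_injective hσ
  have hsplit : (pairingFlatten h₁').symm.trans (pairingFlatten h₂) =
      ((pairingFlatten h₁).symm.trans (pairingFlatten h₂)) *
        (((pairingFlatten h₁).symm.trans σ.symm).trans (pairingFlatten h₁)) := by
    rw [hflat]; ext; simp
  rw [pairingSign, hsplit, map_mul, sign_symm_trans_trans, sign_symm, mul_comm, pairingSign]

end DirectedPairing

theorem invariant_orientation_indep_general {ι : Type*} (b : ℕ)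
    (g : Matrix ι ι ℝ) (hg : g.transpose = (-1 : ℝ) ^ b • g)
    {S : Type*} [Fintype S] [DecidableEq S] {n : ℕ} (φ : S → ι)
    (Mref E E' : Fin n → S × S)
    (href : IsDirectedPairing Mref) (hE : IsDirectedPairing E)
    (hE' : IsDirectedPairing E')
    (hsame : ∃ τ : Equiv.Perm (Fin n), ∀ i,
      E' i = E (τ i) ∨ E' i = ((E (τ i)).2, (E (τ i)).1)) :
    ((pairingSign hE href : ℤ) : ℝ) ^ b * ∏ i, g (φ (E i).1) (φ (E i).2) =
      ((pairingSign hE' href : ℤ) : ℝ) ^ b * ∏ i, g (φ (E' i).1) (φ (E' i).2) := by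
  obtain ⟨τ, hτ⟩ := hsame
  obtain ⟨t, ht⟩ := exists_pairingListing_eq_comp_reorientPerm τ hτ
  set u : ℤˣ := ∏ i, sign (t i)
  have hsign : pairingSign hE' href = u * pairingSign hE href := by
    rw [pairingSign_eq_of_pairingListing_eq_comp hE hE' href ht, sign_reorientPerm]
  have hpair (i : Fin n) : g (φ (E' i).1) (φ (E' i).2) =
      ((sign (t i) : ℤ) : ℝ) ^ b * g (φ (E (τ i)).1) (φ (E (τ i)).2) := by
    rw [← pairingListing_zero, ← pairingListing_one, ht]
    simpa using
      Matrix.apply_perm_two_of_transpose_eq hg (fun j => φ (pairingListing E (τ i, j))) (t i)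
  have hprod : ∏ i, g (φ (E' i).1) (φ (E' i).2) =
      ((u : ℤ) : ℝ) ^ b * ∏ i, g (φ (E i).1) (φ (E i).2) := by
    rw [Finset.prod_congr rfl fun i _ => hpair i, Finset.prod_mul_distrib, Finset.prod_pow,
      Equiv.prod_comp τ fun j => g (φ (E j).1) (φ (E j).2)]
    simp [u]
  have hu : ((u : ℤ) : ℝ) ^ b * ((u : ℤ) : ℝ) ^ b = 1 := by
    rw [← mul_pow, ← Int.cast_mul, ← Units.val_mul, Int.units_mul_self]; simp
  rw [hsign, hprod, Units.val_mul, Int.cast_mul]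
  linear_combination (-((pairingSign hE href : ℤ) : ℝ) ^ b * ∏ i, g (φ (E i).1) (φ (E i).2)) * hu

/-- The sign-weighted product of bilinear-form contractions defining a tensor invariant
is independent of the chosen orientation of the stranded graph: if `E'` is obtained
from the directed pairing `E` by reordering its pairs and reversing the orientation of
some of them, and `g` has the graded symmetry `gᵀ = (−1)^b g`, then
`ε(E, M_ref)^b · ∏ g (φ k) (φ l) = ε(E', M_ref)^b · ∏ g (φ k) (φ l)`. -/
theorem invariant_orientation_indep {ι : Type*} (b : ℕ) (hb : b = 0 ∨ b = 1)
    (g : Matrix ι ι ℝ) (hg : g.transpose = (-1 : ℝ) ^ b • g)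
    {S : Type*} [Fintype S] [DecidableEq S] {n : ℕ} (φ : S → ι)
    (Mref E E' : Fin n → S × S)
    (href : IsDirectedPairing Mref) (hE : IsDirectedPairing E)
    (hE' : IsDirectedPairing E')
    (hsame : ∃ τ : Equiv.Perm (Fin n), ∀ i,
      E' i = E (τ i) ∨ E' i = ((E (τ i)).2, (E (τ i)).1)) :
    ((pairingSign hE href : ℤ) : ℝ) ^ b * ∏ i, g (φ (E i).1) (φ (E i).2) =
      ((pairingSign hE' href : ℤ) : ℝ) ^ b * ∏ i, g (φ (E' i).1) (φ (E' i).2) :=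
  invariant_orientation_indep_general b g hg φ Mref E E' href hE hE' hsame
end

section
/- For a Young diagram λ, define the dimension function dim(π_{λ, x}) := ∏_{(i,j) ∈ λ} (x − i + j) / h_λ(i,j) for x ∈ ℚ, where h_λ(i,j) is the hook length of the cell (i,j). Then for every N ∈ ℚ one has dim(π_{λ, −N}) = (−1)^{|λ|} · dim(π_{λ', N}), where |λ| is the number of cells of λ and λ' is the transpose diagram: trading N for −N exchanges rows and columns, i.e. symmetrization and antisymmetrization. -/
/-- The hook length of a cell `(i, j)` of a Young diagram `μ`:
the number of cells `(k, l) ∈ μ` with (`k = i` and `l ≥ j`) or (`l = j` and `k ≥ i`). -/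
def hookLength (μ : YoungDiagram) (i j : ℕ) : ℕ :=
  (μ.cells.filter fun c => (c.1 = i ∧ j ≤ c.2) ∨ (c.2 = j ∧ i ≤ c.1)).card

/-- The dimension function of the representation indexed by the Young diagram `μ`,
`dim(π_{μ, x}) = ∏_{(i,j) ∈ μ} (x − i + j) / h_μ(i,j)`. -/
def dimRep (μ : YoungDiagram) (x : ℚ) : ℚ :=
  ∏ c ∈ μ.cells, (x - (c.1 : ℚ) + (c.2 : ℚ)) / (hookLength μ c.1 c.2 : ℚ)

lemma hookLength_transpose (μ : YoungDiagram) (i j : ℕ) :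
    hookLength μ.transpose j i = hookLength μ i j := by
  unfold hookLength
  apply Finset.card_nbij' (fun c => c.swap) (fun c => c.swap)
  · intro c hc
    simp only [Finset.mem_coe, Finset.mem_filter, YoungDiagram.mem_cells] at hc ⊢
    obtain ⟨h1, h2⟩ := hc
    rw [YoungDiagram.mem_transpose] at h1
    exact ⟨h1, h2.symm.imp (fun h => h) (fun h => h)⟩
  · intro c hc
    simp only [Finset.mem_coe, Finset.mem_filter, YoungDiagram.mem_cells] at hc ⊢
    obtain ⟨h1, h2⟩ := hc
    rw [YoungDiagram.mem_transpose]
    exact ⟨h1, h2.symm.imp (fun h => h) (fun h => h)⟩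
  · intro c _; simp
  · intro c _; simp

lemma dimRep_transpose (μ : YoungDiagram) (N : ℚ) :
    dimRep μ.transpose N =
      ∏ c ∈ μ.cells, (N - (c.2 : ℚ) + (c.1 : ℚ)) / (hookLength μ c.1 c.2 : ℚ) := by
  unfold dimRep
  apply Finset.prod_nbij' (fun c => c.swap) (fun c => c.swap)
  · intro c hc
    simp only [Finset.mem_coe, YoungDiagram.mem_cells] at hc ⊢
    rwa [YoungDiagram.mem_transpose] at hc
  · intro c hc
    simp only [Finset.mem_coe, YoungDiagram.mem_cells] at hc ⊢
    rwa [YoungDiagram.mem_transpose]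
  · intro c _; simp
  · intro c _; simp
  · intro c _
    simp [Prod.swap, hookLength_transpose]

/-- Duality of dimensions: `dim(π_{μ, −N}) = (−1)^{|μ|} · dim(π_{μ', N})`, i.e.
trading `N` for `−N` exchanges rows and columns (symmetrization and antisymmetrization). -/
theorem dimRep_neg (μ : YoungDiagram) (N : ℚ) :
    dimRep μ (-N) = (-1) ^ μ.card * dimRep μ.transpose N := by
  rw [dimRep_transpose]
  unfold dimRep
  rw [YoungDiagram.card, ← Finset.prod_const, ← Finset.prod_mul_distrib]
  apply Finset.prod_congr rfl
  intro c _
  field_simp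
  ring
end
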